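/- Let r ≥ 1 and suppose (a_1,...,a_r) ∈ 𝒜_r* with a_1 ≤ a_2 ≤ ⋯ ≤ a_r. If a_k = a_{k+1} for some k ∈ {1,...,r-1}, then Σ_{j=1}^k a_j > k(k+1)/2 (strict inequality). -/

import Mathlib

/-!
A set `T` is tight when the lower bound `|T|(|T|+1)/2` on its sum is attained. Removing an
element `i` from a tight set `T` costs at most `|T|`, since `T \ {i}` still satisfies the lower
bound; adding an element `j` gains at least `|T| + 1`. Hence every coordinate inside a tight set
is strictly smaller than every coordinate outside it. If the first `k` coordinates summed to
exactly `k(k+1)/2`, this would give `a_k < a_{k+1}`.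
-/

/-- The set `𝒜_r*`. -/
def Astar (r : ℕ) : Set (Fin r → ℝ) :=
  {a : Fin r → ℝ |
    (∑ j, a j) = (r : ℝ) * ((r : ℝ) + 1) / 2 ∧
    ∀ E : Finset (Fin r), (E.card : ℝ) * ((E.card : ℝ) + 1) / 2 ≤ ∑ j ∈ E, a j}

open Finset

section Tight

variable {ι : Type*} [DecidableEq ι] {a : ι → ℝ} {T : Finset ι}

theorem le_card_of_mem_of_sum_eq
    (hE : ∀ E : Finset ι, (#E : ℝ) * (#E + 1) / 2 ≤ ∑ j ∈ E, a j)
    (hT : ∑ j ∈ T, a j = (#T : ℝ) * (#T + 1) / 2) {i : ι} (hi : i ∈ T) :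
    a i ≤ #T := by
  have hcard : (#(T.erase i) : ℝ) = #T - 1 := by
    rw [card_erase_of_mem hi, Nat.cast_pred (card_pos.mpr ⟨i, hi⟩)]
  have hsum := add_sum_erase T a hi
  have hrest := hE (T.erase i)
  rw [hcard] at hrest
  nlinarith

theorem card_add_one_le_of_notMem_of_sum_eq
    (hE : ∀ E : Finset ι, (#E : ℝ) * (#E + 1) / 2 ≤ ∑ j ∈ E, a j)
    (hT : ∑ j ∈ T, a j = (#T : ℝ) * (#T + 1) / 2) {j : ι} (hj : j ∉ T) :
    (#T : ℝ) + 1 ≤ a j := by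
  have hmore := hE (insert j T)
  rw [card_insert_of_notMem hj, sum_insert hj, hT] at hmore
  push_cast at hmore
  nlinarith

theorem lt_of_mem_of_notMem_of_sum_eq
    (hE : ∀ E : Finset ι, (#E : ℝ) * (#E + 1) / 2 ≤ ∑ j ∈ E, a j)
    (hT : ∑ j ∈ T, a j = (#T : ℝ) * (#T + 1) / 2) {i j : ι} (hi : i ∈ T) (hj : j ∉ T) :
    a i < a j :=
  calc a i ≤ #T := le_card_of_mem_of_sum_eq hE hT hi
    _ < #T + 1 := lt_add_one _
    _ ≤ a j := card_add_one_le_of_notMem_of_sum_eq hE hT hj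

end Tight

theorem stmt_9 (r : ℕ) (a : Fin r → ℝ)
    (ha : a ∈ Astar r)
    (k : ℕ) (hk1 : 1 ≤ k) (hk2 : k < r)
    (heq : a ⟨k - 1, by omega⟩ = a ⟨k, hk2⟩) :
    (k : ℝ) * ((k : ℝ) + 1) / 2 < ∑ j ∈ Finset.univ.filter (fun j : Fin r => (j : ℕ) < k), a j := by
  set T := Finset.univ.filter (fun j : Fin r => (j : ℕ) < k)
  have hcard : #T = k := by
    rw [Fin.card_filter_val_lt, min_eq_right hk2.le]
  refine lt_of_le_of_ne (hcard ▸ ha.2 T) fun htight => ?_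
  have hlt := lt_of_mem_of_notMem_of_sum_eq ha.2 (hcard ▸ htight.symm)
    (i := ⟨k - 1, by omega⟩) (j := ⟨k, hk2⟩) (by simp [T]; omega) (by simp [T])
  exact hlt.ne heq
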